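/- arXiv:2311.00521 — 2 statements merged into one kernel-verified Lean document; each statement's English description precedes it below -/
import Mathlib

section
/- Let d ≥ 1, M > 0, σ ≥ 0, and let f : ℝ^d → ℝ be M-Lipschitz. Suppose f attains its minimum at x⋆ and f_σ attains its minimum at x⋆_σ. Then 0 ≤ f_σ(x⋆_σ) − f(x⋆) ≤ M·σ·√(d/2). -/
/-!
The Gaussian smoothing averages `f (x + σ u)` against the probability density
`π^(-d/2) e^(-‖u‖²)`. Since `f ≥ f x⋆` everywhere, every such average is at least `f x⋆`.
Conversely, `f (x⋆ + σ u) ≤ f x⋆ + M σ ‖u‖`, so `f_σ (x⋆_σ) ≤ f_σ x⋆ ≤ f x⋆ + M σ E‖U‖`, and by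
Cauchy–Schwarz `E‖U‖ ≤ √(E‖U‖²) = √(d/2)`, because each coordinate of `U` has variance `1/2`.
-/

open MeasureTheory
open scoped Classical

/-- Gaussian smoothing of `f : ℝ^d → ℝ` with radius `σ`:
`f_σ(x) = π^(−d/2) ∫ f(x + σu) e^(−‖u‖²) du`, with `f_0 = f`. -/
noncomputable def gsmooth {d : ℕ} (f : EuclideanSpace ℝ (Fin d) → ℝ) (σ : ℝ)
    (x : EuclideanSpace ℝ (Fin d)) : ℝ :=
  if σ = 0 then f x
  else Real.pi ^ (-(d : ℝ) / 2) *
    ∫ u : EuclideanSpace ℝ (Fin d), f (x + σ • u) * Real.exp (-‖u‖ ^ 2)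

open Real

theorem sq_integral_mul_le_integral_mul_integral_sq_mul {α : Type*} [MeasurableSpace α]
    {μ : Measure α} {g w : α → ℝ} (hw : ∀ a, 0 ≤ w a) (hw_int : Integrable w μ)
    (hgw : Integrable (fun a => g a * w a) μ) (hg2w : Integrable (fun a => g a ^ 2 * w a) μ) :
    (∫ a, g a * w a ∂μ) ^ 2 ≤ (∫ a, w a ∂μ) * ∫ a, g a ^ 2 * w a ∂μ := by
  have hquad : ∀ t : ℝ, 0 ≤ (∫ a, w a ∂μ) * (t * t) + (-2 * ∫ a, g a * w a ∂μ) * t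
      + ∫ a, g a ^ 2 * w a ∂μ := fun t => calc
    0 ≤ ∫ a, (g a - t) ^ 2 * w a ∂μ := integral_nonneg fun a => mul_nonneg (sq_nonneg _) (hw a)
    _ = ∫ a, ((t * t) * w a + (-2 * t) * (g a * w a) + g a ^ 2 * w a) ∂μ := by
      congr 1; ext a; ring
    _ = _ := by
      rw [integral_add _ hg2w, integral_add, integral_const_mul, integral_const_mul]
      · ring
      · exact hw_int.const_mul _
      · exact hgw.const_mul _
      · exact (hw_int.const_mul _).add (hgw.const_mul _)
  have := discrim_le_zero hquad
  rw [discrim] at this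
  linarith

theorem integral_exp_neg_sq : ∫ x : ℝ, exp (-x ^ 2) = √π := by
  simpa using integral_gaussian 1

theorem integral_sq_mul_exp_neg_sq : ∫ x : ℝ, x ^ 2 * exp (-x ^ 2) = √π / 2 := by
  have hIoi : ∫ x in Set.Ioi (0 : ℝ), x ^ 2 * exp (-x ^ 2) = √π / 4 := by
    have h := integral_rpow_mul_exp_neg_rpow (p := 2) (q := 2) two_pos (by norm_num)
    rw [show ((2 : ℝ) + 1) / 2 = 1 / 2 + 1 by norm_num, Gamma_add_one (by norm_num),
      Gamma_one_half_eq] at h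
    simp only [rpow_two] at h
    rw [h]; ring
  have h := integral_comp_abs (f := fun x => x ^ 2 * exp (-x ^ 2))
  simp only [sq_abs] at h
  rw [h, hIoi]
  ring

theorem mul_exp_neg_sq_le (t : ℝ) : t * exp (-t ^ 2) ≤ exp (-(1 / 2) * t ^ 2) := by
  have hle : t ≤ exp (t ^ 2 / 2) := by
    nlinarith [add_one_le_exp (t ^ 2 / 2), sq_nonneg (t - 1)]
  calc t * exp (-t ^ 2) ≤ exp (t ^ 2 / 2) * exp (-t ^ 2) := by gcongr
    _ = exp (-(1 / 2) * t ^ 2) := by rw [← exp_add]; ring_nf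

section GaussianIntegrals

variable {V : Type*} [NormedAddCommGroup V] [InnerProductSpace ℝ V] [FiniteDimensional ℝ V]
  [MeasurableSpace V] [BorelSpace V]

theorem integrable_exp_neg_mul_norm_sq {b : ℝ} (hb : 0 < b) :
    Integrable (fun v : V => exp (-b * ‖v‖ ^ 2)) := by
  apply Integrable.of_integral_ne_zero
  rw [GaussianFourier.integral_rexp_neg_mul_sq_norm hb]
  positivity

theorem integral_exp_neg_norm_sq :
    ∫ v : V, exp (-‖v‖ ^ 2) = π ^ (Module.finrank ℝ V / 2 : ℝ) := by
  simpa using GaussianFourier.integral_rexp_neg_mul_sq_norm (V := V) one_pos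

theorem integrable_exp_neg_norm_sq : Integrable (fun v : V => exp (-‖v‖ ^ 2)) := by
  simpa using integrable_exp_neg_mul_norm_sq (V := V) one_pos

theorem integrable_norm_mul_exp_neg_norm_sq :
    Integrable (fun v : V => ‖v‖ * exp (-‖v‖ ^ 2)) :=
  (integrable_exp_neg_mul_norm_sq (b := 1 / 2) (by norm_num)).mono' (by fun_prop) <|
    .of_forall fun v => by
      rw [norm_of_nonneg (by positivity)]
      exact mul_exp_neg_sq_le ‖v‖

theorem LipschitzWith.integrable_comp_add_smul_mul_exp_neg_norm_sq {K : NNReal} {f : V → ℝ}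
    (hf : LipschitzWith K f)
    (x : V) (σ : ℝ) : Integrable (fun u => f (x + σ • u) * exp (-‖u‖ ^ 2)) := by
  have hcont := hf.continuous
  refine ((integrable_exp_neg_norm_sq.const_mul |f x|).add
    (integrable_norm_mul_exp_neg_norm_sq.const_mul (K * |σ|))).mono' (by fun_prop)
    (.of_forall fun u => ?_)
  have hlip : |f (x + σ • u)| ≤ |f x| + K * |σ| * ‖u‖ := by
    have := hf.dist_le_mul (x + σ • u) x
    simp only [dist_eq_norm, add_sub_cancel_left, norm_smul, norm_eq_abs] at this
    have := abs_sub_abs_le_abs_sub (f (x + σ • u)) (f x)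
    linarith
  rw [norm_mul, norm_of_nonneg (exp_pos _).le, norm_eq_abs]
  calc |f (x + σ • u)| * exp (-‖u‖ ^ 2) ≤ (|f x| + K * |σ| * ‖u‖) * exp (-‖u‖ ^ 2) := by gcongr
    _ = _ := by simp only [Pi.add_apply]; ring

end GaussianIntegrals

section EuclideanMoments

variable {ι : Type*} [Fintype ι]

theorem integral_sq_apply_mul_exp_neg_norm_sq (i : ι) :
    ∫ v : EuclideanSpace ℝ ι, v i ^ 2 * exp (-‖v‖ ^ 2)
      = 1 / 2 * ∫ v : EuclideanSpace ℝ ι, exp (-‖v‖ ^ 2) := by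
  let g : ι → ℝ → ℝ := fun j t => (if j = i then t ^ 2 else 1) * exp (-t ^ 2)
  have hg : ∀ j, ∫ t, g j t = (if j = i then 1 / 2 else 1) * √π := by
    intro j
    by_cases h : j = i
    · simp [g, h, integral_sq_mul_exp_neg_sq, div_eq_inv_mul]
    · simpa [g, h] using integral_exp_neg_sq
  have hprod : ∀ x : ι → ℝ, ∏ j, g j (x j) = x i ^ 2 * exp (-∑ j, x j ^ 2) := by
    intro x
    simp only [g, Finset.prod_mul_distrib, Fintype.prod_ite_eq', ← exp_sum,
      ← Finset.sum_neg_distrib]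
  have htoLp (F : EuclideanSpace ℝ ι → ℝ) : ∫ x : ι → ℝ, F (WithLp.toLp 2 x) = ∫ v, F v :=
    (PiLp.volume_preserving_toLp ι).integral_comp
      (MeasurableEquiv.toLp 2 (ι → ℝ)).measurableEmbedding F
  rw [← htoLp, ← htoLp]
  simp only [EuclideanSpace.real_norm_sq_eq]
  have hexp : ∀ x : ι → ℝ, exp (-∑ j, x j ^ 2) = ∏ j, exp (-x j ^ 2) := by
    intro x; rw [← exp_sum, Finset.sum_neg_distrib]
  simp_rw [← hprod, hexp, integral_fintype_prod_volume_eq_prod, hg, Finset.prod_mul_distrib,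
    Fintype.prod_ite_eq']
  rw [integral_fintype_prod_volume_eq_pow (fun t : ℝ => exp (-t ^ 2)), integral_exp_neg_sq,
    Finset.prod_const, Finset.card_univ]

theorem integrable_sq_apply_mul_exp_neg_norm_sq (i : ι) :
    Integrable (fun v : EuclideanSpace ℝ ι => v i ^ 2 * exp (-‖v‖ ^ 2)) := by
  apply Integrable.of_integral_ne_zero
  rw [integral_sq_apply_mul_exp_neg_norm_sq, integral_exp_neg_norm_sq]
  positivity

theorem norm_sq_mul_exp_neg_norm_sq_eq_sum (v : EuclideanSpace ℝ ι) :
    ‖v‖ ^ 2 * exp (-‖v‖ ^ 2) = ∑ i, v i ^ 2 * exp (-‖v‖ ^ 2) := by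
  rw [← Finset.sum_mul, ← EuclideanSpace.real_norm_sq_eq]

theorem integrable_norm_sq_mul_exp_neg_norm_sq :
    Integrable (fun v : EuclideanSpace ℝ ι => ‖v‖ ^ 2 * exp (-‖v‖ ^ 2)) := by
  simp_rw [norm_sq_mul_exp_neg_norm_sq_eq_sum]
  exact integrable_finsetSum _ fun i _ => integrable_sq_apply_mul_exp_neg_norm_sq i

theorem integral_norm_sq_mul_exp_neg_norm_sq :
    ∫ v : EuclideanSpace ℝ ι, ‖v‖ ^ 2 * exp (-‖v‖ ^ 2)
      = Fintype.card ι / 2 * ∫ v : EuclideanSpace ℝ ι, exp (-‖v‖ ^ 2) := by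
  simp_rw [norm_sq_mul_exp_neg_norm_sq_eq_sum]
  rw [integral_finsetSum _ fun i _ => integrable_sq_apply_mul_exp_neg_norm_sq i]
  simp_rw [integral_sq_apply_mul_exp_neg_norm_sq, Finset.sum_const, Finset.card_univ,
    nsmul_eq_mul]
  ring

theorem integral_norm_mul_exp_neg_norm_sq_le :
    ∫ v : EuclideanSpace ℝ ι, ‖v‖ * exp (-‖v‖ ^ 2)
      ≤ √(Fintype.card ι / 2) * ∫ v : EuclideanSpace ℝ ι, exp (-‖v‖ ^ 2) := by
  have hCS := sq_integral_mul_le_integral_mul_integral_sq_mul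
    (g := fun v : EuclideanSpace ℝ ι => ‖v‖) (fun v => (exp_pos (-‖v‖ ^ 2)).le)
    integrable_exp_neg_norm_sq integrable_norm_mul_exp_neg_norm_sq
    integrable_norm_sq_mul_exp_neg_norm_sq
  rw [integral_norm_sq_mul_exp_neg_norm_sq] at hCS
  refine le_of_sq_le_sq (hCS.trans_eq ?_) (by positivity)
  rw [mul_pow, sq_sqrt (by positivity)]
  ring

end EuclideanMoments

section Smoothing

variable {d : ℕ} {K : NNReal} {f : EuclideanSpace ℝ (Fin d) → ℝ}

theorem gsmooth_of_ne_zero {σ : ℝ} (hσ : σ ≠ 0) (x : EuclideanSpace ℝ (Fin d)) :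
    gsmooth f σ x = π ^ (-(d : ℝ) / 2) *
      ∫ u : EuclideanSpace ℝ (Fin d), f (x + σ • u) * exp (-‖u‖ ^ 2) :=
  if_neg hσ

theorem pi_rpow_neg_mul_integral_exp_neg_norm_sq :
    π ^ (-(d : ℝ) / 2) * ∫ u : EuclideanSpace ℝ (Fin d), exp (-‖u‖ ^ 2) = 1 := by
  rw [integral_exp_neg_norm_sq, finrank_euclideanSpace_fin, ← rpow_add pi_pos, neg_div,
    neg_add_cancel, rpow_zero]

theorem pi_rpow_neg_mul_integral_norm_mul_exp_neg_norm_sq_le :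
    π ^ (-(d : ℝ) / 2) * ∫ u : EuclideanSpace ℝ (Fin d), ‖u‖ * exp (-‖u‖ ^ 2) ≤ √(d / 2) := by
  calc π ^ (-(d : ℝ) / 2) * ∫ u : EuclideanSpace ℝ (Fin d), ‖u‖ * exp (-‖u‖ ^ 2)
      ≤ π ^ (-(d : ℝ) / 2) * (√(d / 2) * ∫ u : EuclideanSpace ℝ (Fin d), exp (-‖u‖ ^ 2)) := by
        gcongr
        simpa using integral_norm_mul_exp_neg_norm_sq_le (ι := Fin d)
    _ = √(d / 2) := by
        rw [mul_left_comm, pi_rpow_neg_mul_integral_exp_neg_norm_sq, mul_one]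

theorem LipschitzWith.le_gsmooth (hf : LipschitzWith K f) {m : ℝ} (hm : ∀ y, m ≤ f y) (σ : ℝ)
    (x : EuclideanSpace ℝ (Fin d)) : m ≤ gsmooth f σ x := by
  rcases eq_or_ne σ 0 with rfl | hσ
  · simpa [gsmooth] using hm x
  rw [gsmooth_of_ne_zero hσ]
  calc m = π ^ (-(d : ℝ) / 2) * ∫ u : EuclideanSpace ℝ (Fin d), m * exp (-‖u‖ ^ 2) := by
        rw [integral_const_mul, mul_left_comm, pi_rpow_neg_mul_integral_exp_neg_norm_sq, mul_one]
    _ ≤ _ := by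
        refine mul_le_mul_of_nonneg_left (integral_mono (integrable_exp_neg_norm_sq.const_mul m)
          (hf.integrable_comp_add_smul_mul_exp_neg_norm_sq x σ) fun u => ?_) (by positivity)
        exact mul_le_mul_of_nonneg_right (hm _) (exp_pos _).le

theorem LipschitzWith.gsmooth_le (hf : LipschitzWith K f) {σ : ℝ} (hσ : 0 ≤ σ)
    (x : EuclideanSpace ℝ (Fin d)) : gsmooth f σ x ≤ f x + K * σ * √(d / 2) := by
  rcases hσ.eq_or_lt with rfl | hσ
  · simp [gsmooth]
  rw [gsmooth_of_ne_zero hσ.ne']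
  have hint := ((integrable_exp_neg_norm_sq (V := EuclideanSpace ℝ (Fin d))).const_mul (f x)).add
    (integrable_norm_mul_exp_neg_norm_sq.const_mul (K * σ))
  calc π ^ (-(d : ℝ) / 2) * ∫ u : EuclideanSpace ℝ (Fin d), f (x + σ • u) * exp (-‖u‖ ^ 2)
      ≤ π ^ (-(d : ℝ) / 2) * ∫ u : EuclideanSpace ℝ (Fin d),
          (f x * exp (-‖u‖ ^ 2) + K * σ * (‖u‖ * exp (-‖u‖ ^ 2))) := by
        refine mul_le_mul_of_nonneg_left (integral_mono
          (hf.integrable_comp_add_smul_mul_exp_neg_norm_sq x σ) hint fun u => ?_) (by positivity)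
        have := hf.le_add_mul (x + σ • u) x
        rw [dist_eq_norm, add_sub_cancel_left, norm_smul, norm_of_nonneg hσ.le] at this
        nlinarith [exp_pos (-‖u‖ ^ 2)]
    _ = f x * (π ^ (-(d : ℝ) / 2) * ∫ u : EuclideanSpace ℝ (Fin d), exp (-‖u‖ ^ 2)) + K * σ *
          (π ^ (-(d : ℝ) / 2) * ∫ u : EuclideanSpace ℝ (Fin d), ‖u‖ * exp (-‖u‖ ^ 2)) := by
        rw [integral_add (integrable_exp_neg_norm_sq.const_mul _)
          (integrable_norm_mul_exp_neg_norm_sq.const_mul _), integral_const_mul, integral_const_mul]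
        ring
    _ ≤ f x + K * σ * √(d / 2) := by
        rw [pi_rpow_neg_mul_integral_exp_neg_norm_sq, mul_one]
        gcongr
        exact pi_rpow_neg_mul_integral_norm_mul_exp_neg_norm_sq_le

end Smoothing

theorem gsmooth_min_bound_lipschitz_general {d : ℕ} {M σ : ℝ} (hM : 0 < M) (hσ : 0 ≤ σ)
    (f : EuclideanSpace ℝ (Fin d) → ℝ)
    (hlip : ∀ x y, |f x - f y| ≤ M * ‖x - y‖)
    (xstar xsig : EuclideanSpace ℝ (Fin d))
    (hmin : ∀ y, f xstar ≤ f y)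
    (hminsig : ∀ y, gsmooth f σ xsig ≤ gsmooth f σ y) :
    0 ≤ gsmooth f σ xsig - f xstar ∧
      gsmooth f σ xsig - f xstar ≤ M * σ * Real.sqrt (d / 2) := by
  have hf : LipschitzWith M.toNNReal f := .of_dist_le_mul fun x y => by
    rw [Real.dist_eq, dist_eq_norm, Real.coe_toNNReal M hM.le]; exact hlip x y
  have hupper := hf.gsmooth_le hσ xstar
  rw [Real.coe_toNNReal M hM.le] at hupper
  exact ⟨sub_nonneg.2 (hf.le_gsmooth hmin σ xsig), by linarith [hminsig xstar]⟩

/-- For `f` `M`-Lipschitz with minimizer `x⋆` of `f` and minimizer `x⋆_σ`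
of `f_σ`, `0 ≤ f_σ(x⋆_σ) − f(x⋆) ≤ Mσ√(d/2)`. -/
theorem gsmooth_min_bound_lipschitz {d : ℕ} (hd : 1 ≤ d) {M σ : ℝ} (hM : 0 < M) (hσ : 0 ≤ σ)
    (f : EuclideanSpace ℝ (Fin d) → ℝ)
    (hlip : ∀ x y, |f x - f y| ≤ M * ‖x - y‖)
    (xstar xsig : EuclideanSpace ℝ (Fin d))
    (hmin : ∀ y, f xstar ≤ f y)
    (hminsig : ∀ y, gsmooth f σ xsig ≤ gsmooth f σ y) :
    0 ≤ gsmooth f σ xsig - f xstar ∧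
      gsmooth f σ xsig - f xstar ≤ M * σ * Real.sqrt (d / 2) :=
  gsmooth_min_bound_lipschitz_general hM hσ f hlip xstar xsig hmin hminsig
end

section
/- Let d ≥ 1, L > 0, σ > 0, and let f : ℝ^d → ℝ be L-smooth and attain a minimum at some x⋆ ∈ ℝ^d. Let ε ≥ 4σ²Ld/3. Then for every x ∈ f⋆(σ²Ld/4) and every y ∉ f⋆(ε), one has f_σ(x) < f_σ(y). -/
/-!
Since `∇f` is `L`-Lipschitz, `f (x + σu) = f x + σ⟪∇f x, u⟫ + r u` with `|r u| ≤ Lσ²‖u‖²`.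
Against the weight `e^{-‖u‖²}` the linear term integrates to zero by symmetry and the second
moment is `d/2 · π^{d/2}`, so `|f_σ - f| ≤ Lσ²d/2` everywhere. Hence
`f_σ x ≤ f x⋆ + 3σ²Ld/4`, while `f_σ y > f x⋆ + ε - σ²Ld/2 ≥ f x⋆ + 5σ²Ld/6`.
-/

open MeasureTheory
open scoped Classical

open Real Set Module InnerProductSpace
open scoped RealInnerProductSpace

theorem integral_Ioi_pow_add_two_mul_exp_neg_sq (k : ℕ) :
    ∫ y in Ioi (0 : ℝ), y ^ (k + 2) * exp (-y ^ 2) =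
      (k + 1) / 2 * ∫ y in Ioi (0 : ℝ), y ^ k * exp (-y ^ 2) := by
  have moment (m : ℕ) :
      ∫ y in Ioi (0 : ℝ), y ^ m * exp (-y ^ 2) = 1 / 2 * Gamma ((m + 1) / 2) := by
    rw [← integral_rpow_mul_exp_neg_rpow two_pos (by linarith [m.cast_nonneg (α := ℝ)])]
    simp only [rpow_natCast, rpow_two]
  rw [moment, moment, show ((k + 2 : ℕ) + 1 : ℝ) / 2 = (k + 1) / 2 + 1 by push_cast; ring,
    Gamma_add_one (by positivity)]
  ring

theorem abs_sub_sub_inner_gradient_le {E : Type*} [NormedAddCommGroup E] [InnerProductSpace ℝ E]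
    [CompleteSpace E] {f : E → ℝ} {L : ℝ} (hL : 0 ≤ L) (hf : Differentiable ℝ f)
    (hgrad : ∀ x y, ‖gradient f x - gradient f y‖ ≤ L * ‖x - y‖) (a v : E) :
    |f (a + v) - f a - ⟪gradient f a, v⟫| ≤ L * ‖v‖ ^ 2 := by
  have fderiv_eq (z : E) : fderiv ℝ f z = toDual ℝ E (gradient f z) :=
    ((toDual ℝ E).apply_symm_apply _).symm
  have mvt := (convex_segment a (a + v)).norm_image_sub_le_of_norm_fderiv_le' (𝕜 := ℝ)
    (fun z _ ↦ hf z) (φ := fderiv ℝ f a) (C := L * ‖v‖) (fun z hz ↦ ?_)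
    (left_mem_segment ℝ a (a + v)) (right_mem_segment ℝ a (a + v))
  · rw [fderiv_eq, toDual_apply_apply, add_sub_cancel_left, Real.norm_eq_abs] at mvt
    simpa [sq, mul_assoc] using mvt
  · rw [fderiv_eq, fderiv_eq, ← map_sub, LinearIsometryEquiv.norm_map]
    calc ‖gradient f z - gradient f a‖ ≤ L * ‖z - a‖ := hgrad z a
      _ ≤ L * ‖v‖ := by
        gcongr
        simpa using norm_sub_le_of_mem_segment hz

section GaussianMoments

variable {V : Type*} [NormedAddCommGroup V] [InnerProductSpace ℝ V] [FiniteDimensional ℝ V]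
  [MeasurableSpace V] [BorelSpace V]

theorem integrable_exp_neg_sq_norm : Integrable (fun v : V ↦ exp (-‖v‖ ^ 2)) := by
  have := (GaussianFourier.integrable_cexp_neg_mul_sq_norm_add (V := V) (b := 1) (by simp) 0 0).norm
  norm_num [Complex.norm_exp] at this
  simpa only [← Complex.ofReal_pow, Complex.ofReal_re] using this

theorem integral_exp_neg_sq_norm : ∫ v : V, exp (-‖v‖ ^ 2) = π ^ (finrank ℝ V / 2 : ℝ) := by
  simpa using GaussianFourier.integral_rexp_neg_mul_sq_norm (V := V) one_pos

theorem integrable_sq_norm_mul_exp_neg_sq_norm :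
    Integrable (fun v : V ↦ ‖v‖ ^ 2 * exp (-‖v‖ ^ 2)) := by
  rcases subsingleton_or_nontrivial V with hV | hV
  · simp [Subsingleton.elim _ (0 : V)]
  obtain ⟨k, hk⟩ := Nat.exists_eq_add_one_of_ne_zero (finrank_pos (R := ℝ) (M := V)).ne'
  refine (integrable_fun_norm_addHaar volume (f := fun y ↦ y ^ 2 * exp (-y ^ 2))).mpr ?_
  have := integrableOn_rpow_mul_exp_neg_mul_sq one_pos
    (neg_one_lt_zero.trans_le (Nat.cast_nonneg (k + 2)))
  simp only [rpow_natCast, neg_mul, one_mul] at this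
  simpa [hk, ← mul_assoc, ← pow_add] using this

theorem integral_sq_norm_mul_exp_neg_sq_norm :
    ∫ v : V, ‖v‖ ^ 2 * exp (-‖v‖ ^ 2) = finrank ℝ V / 2 * π ^ (finrank ℝ V / 2 : ℝ) := by
  rw [← integral_exp_neg_sq_norm]
  rcases subsingleton_or_nontrivial V with hV | hV
  · simp [Subsingleton.elim _ (0 : V), finrank_zero_of_subsingleton]
  -- in polar coordinates both sides become Γ-integrals, related by `Γ(s + 1) = s Γ(s)`
  obtain ⟨k, hk⟩ := Nat.exists_eq_add_one_of_ne_zero (finrank_pos (R := ℝ) (M := V)).ne'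
  rw [integral_fun_norm_addHaar volume (fun y ↦ y ^ 2 * exp (-y ^ 2)),
    integral_fun_norm_addHaar volume (fun y ↦ exp (-y ^ 2))]
  simp only [hk, add_tsub_cancel_right, smul_eq_mul, ← mul_assoc, ← pow_add,
    integral_Ioi_pow_add_two_mul_exp_neg_sq]
  push_cast
  ring

theorem integrable_inner_mul_exp_neg_sq_norm (w : V) :
    Integrable (fun v : V ↦ ⟪w, v⟫ * exp (-‖v‖ ^ 2)) := by
  refine ((integrable_exp_neg_sq_norm.add integrable_sq_norm_mul_exp_neg_sq_norm).const_mul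
    ‖w‖).mono' (by fun_prop : Continuous _).aestronglyMeasurable (.of_forall fun v ↦ ?_)
  have h_norm : ‖v‖ ≤ 1 + ‖v‖ ^ 2 := by nlinarith [sq_nonneg (‖v‖ - 1)]
  calc ‖⟪w, v⟫ * exp (-‖v‖ ^ 2)‖ = |⟪w, v⟫| * exp (-‖v‖ ^ 2) := by
        rw [norm_mul, norm_eq_abs, norm_of_nonneg (exp_pos _).le]
    _ ≤ ‖w‖ * (1 + ‖v‖ ^ 2) * exp (-‖v‖ ^ 2) := by
        gcongr
        exact (abs_real_inner_le_norm w v).trans (by gcongr)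
    _ = ‖w‖ * (exp (-‖v‖ ^ 2) + ‖v‖ ^ 2 * exp (-‖v‖ ^ 2)) := by ring

theorem integral_inner_mul_exp_neg_sq_norm (w : V) :
    ∫ v : V, ⟪w, v⟫ * exp (-‖v‖ ^ 2) = 0 := by
  have h := integral_neg_eq_self (fun v : V ↦ ⟪w, v⟫ * exp (-‖v‖ ^ 2)) volume
  simp only [inner_neg_right, norm_neg, neg_mul, integral_neg] at h
  linarith

theorem abs_integral_comp_mul_exp_neg_sq_norm_sub_le {f : V → ℝ} {L : ℝ} (hL : 0 ≤ L)
    (hf : Differentiable ℝ f) (hgrad : ∀ x y, ‖gradient f x - gradient f y‖ ≤ L * ‖x - y‖)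
    (x : V) (σ : ℝ) :
    |(∫ u, f (x + σ • u) * exp (-‖u‖ ^ 2)) - π ^ (finrank ℝ V / 2 : ℝ) * f x| ≤
      L * σ ^ 2 * (finrank ℝ V / 2 * π ^ (finrank ℝ V / 2 : ℝ)) := by
  set r : V → ℝ := fun u ↦ f (x + σ • u) - f x - ⟪σ • gradient f x, u⟫
  have hr (u : V) : ‖r u * exp (-‖u‖ ^ 2)‖ ≤ L * σ ^ 2 * (‖u‖ ^ 2 * exp (-‖u‖ ^ 2)) := by
    have taylor := abs_sub_sub_inner_gradient_le hL hf hgrad x (σ • u)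
    rw [inner_smul_right, norm_smul, mul_pow, norm_eq_abs, sq_abs] at taylor
    rw [norm_mul, norm_eq_abs, norm_of_nonneg (exp_pos _).le, ← mul_assoc]
    gcongr
    simpa [r, real_inner_smul_left, mul_assoc, mul_left_comm] using taylor
  have hr_int : Integrable (fun u ↦ r u * exp (-‖u‖ ^ 2)) := by
    have := hf.continuous
    exact (integrable_sq_norm_mul_exp_neg_sq_norm.const_mul (L * σ ^ 2)).mono'
      (by fun_prop : Continuous _).aestronglyMeasurable (.of_forall hr)
  have hsplit : ∫ u, f (x + σ • u) * exp (-‖u‖ ^ 2) = (∫ u : V, f x * exp (-‖u‖ ^ 2)) +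
      (∫ u : V, ⟪σ • gradient f x, u⟫ * exp (-‖u‖ ^ 2)) + ∫ u, r u * exp (-‖u‖ ^ 2) := by
    rw [← integral_add (integrable_exp_neg_sq_norm.const_mul _)
      (integrable_inner_mul_exp_neg_sq_norm _), ← integral_add _ hr_int]
    · congr 1 with u
      ring
    · exact (integrable_exp_neg_sq_norm.const_mul _).add (integrable_inner_mul_exp_neg_sq_norm _)
  rw [hsplit, integral_const_mul, integral_exp_neg_sq_norm, integral_inner_mul_exp_neg_sq_norm,
    add_zero, add_sub_right_comm, mul_comm (f x), sub_self, zero_add,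
    ← integral_sq_norm_mul_exp_neg_sq_norm, ← integral_const_mul]
  exact norm_integral_le_of_norm_le (integrable_sq_norm_mul_exp_neg_sq_norm.const_mul _)
    (.of_forall hr)

end GaussianMoments

theorem abs_gsmooth_sub_le {d : ℕ} {L : ℝ} (hL : 0 ≤ L) {f : EuclideanSpace ℝ (Fin d) → ℝ}
    (hf : Differentiable ℝ f) (hgrad : ∀ x y, ‖gradient f x - gradient f y‖ ≤ L * ‖x - y‖)
    (σ : ℝ) (x : EuclideanSpace ℝ (Fin d)) :
    |gsmooth f σ x - f x| ≤ L * σ ^ 2 * d / 2 := by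
  rcases eq_or_ne σ 0 with rfl | hσ
  · simp [gsmooth]
  have h := abs_integral_comp_mul_exp_neg_sq_norm_sub_le hL hf hgrad x σ
  rw [finrank_euclideanSpace_fin] at h
  set P := π ^ ((d : ℝ) / 2)
  have hP : 0 < P := by positivity
  rw [gsmooth, if_neg hσ, neg_div, rpow_neg pi_pos.le]
  calc |P⁻¹ * (∫ u, f (x + σ • u) * exp (-‖u‖ ^ 2)) - f x|
      = P⁻¹ * |(∫ u, f (x + σ • u) * exp (-‖u‖ ^ 2)) - P * f x| := by
        rw [← abs_of_pos (inv_pos.mpr hP), ← abs_mul, abs_of_pos (inv_pos.mpr hP)]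
        congr 1
        field_simp
    _ ≤ P⁻¹ * (L * σ ^ 2 * (d / 2 * P)) := by gcongr
    _ = L * σ ^ 2 * d / 2 := by field_simp

theorem gsmooth_sublevel_strict_lt_general {d : ℕ} {L σ ε : ℝ} (hL : 0 < L)
    (f : EuclideanSpace ℝ (Fin d) → ℝ)
    (hdiff : Differentiable ℝ f)
    (hgrad : ∀ x y, ‖gradient f x - gradient f y‖ ≤ L * ‖x - y‖)
    (xstar : EuclideanSpace ℝ (Fin d))
    (hε : 4 * σ ^ 2 * L * d / 3 ≤ ε) :
    ∀ x y : EuclideanSpace ℝ (Fin d),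
      f x - f xstar ≤ σ ^ 2 * L * d / 4 → ¬ (f y - f xstar ≤ ε) →
      gsmooth f σ x < gsmooth f σ y := by
  intro x y hx hy
  have hfx := abs_le.mp (abs_gsmooth_sub_le hL.le hdiff hgrad σ x)
  have hfy := abs_le.mp (abs_gsmooth_sub_le hL.le hdiff hgrad σ y)
  have hscale : 0 ≤ σ ^ 2 * L * d := by positivity
  linarith [not_le.mp hy]

/-- For `ε ≥ 4σ²Ld/3`, every `x ∈ f⋆(σ²Ld/4)` and `y ∉ f⋆(ε)` satisfy
`f_σ(x) < f_σ(y)`. -/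
theorem gsmooth_sublevel_strict_lt {d : ℕ} (hd : 1 ≤ d) {L σ ε : ℝ} (hL : 0 < L)
    (hσ : 0 < σ)
    (f : EuclideanSpace ℝ (Fin d) → ℝ)
    (hdiff : Differentiable ℝ f)
    (hgrad : ∀ x y, ‖gradient f x - gradient f y‖ ≤ L * ‖x - y‖)
    (xstar : EuclideanSpace ℝ (Fin d)) (hmin : ∀ y, f xstar ≤ f y)
    (hε : 4 * σ ^ 2 * L * d / 3 ≤ ε) :
    ∀ x y : EuclideanSpace ℝ (Fin d),
      f x - f xstar ≤ σ ^ 2 * L * d / 4 → ¬ (f y - f xstar ≤ ε) →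
      gsmooth f σ x < gsmooth f σ y :=
  gsmooth_sublevel_strict_lt_general hL f hdiff hgrad xstar hε
end
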